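/- Let Λ_1, …, Λ_d ⊆ ℤ₊ⁿ be finite nonempty sets and S ⊆ {1,…,n}. Then the union, over all d-tuples (F_1,…,F_d) with F_ν a nonempty face of N(Λ_ν,S) for each ν, of ⋂_{ν=1}^{d} F_ν*|N(Λ_ν,S) equals Z(S); and the union, over all such d-tuples, of ⋂_{ν=1}^{d} (F_ν*)°|N(Λ_ν,S) equals Z(S) \ {0}. -/

import Mathlib

open scoped RealInnerProductSpace Pointwise

noncomputable section

/-- A subset `F ⊆ P` is a face of `P` if there are `q ∈ ℝⁿ` and `ρ ∈ ℝ` with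
`⟨q, u⟩ = ρ` for every `u ∈ F` and `ρ < ⟨q, y⟩` for every `y ∈ P \ F`. -/
def IsFace {n : ℕ} (P F : Set (EuclideanSpace ℝ (Fin n))) : Prop :=
  F ⊆ P ∧ ∃ (q : EuclideanSpace ℝ (Fin n)) (ρ : ℝ),
    (∀ u ∈ F, ⟪q, u⟫ = ρ) ∧ ∀ y ∈ P \ F, ρ < ⟪q, y⟫

/-- The cone `F*|P` of a face `F` of `P`. -/
def coneOf {n : ℕ} (P F : Set (EuclideanSpace ℝ (Fin n))) :
    Set (EuclideanSpace ℝ (Fin n)) :=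
  {q | ∃ ρ : ℝ, (∀ u ∈ F, ⟪q, u⟫ = ρ) ∧ ∀ y ∈ P \ F, ρ ≤ ⟪q, y⟫}

/-- The interior `(F*)°|P` of the cone of a face `F` of `P`. -/
def coneInterior {n : ℕ} (P F : Set (EuclideanSpace ℝ (Fin n))) :
    Set (EuclideanSpace ℝ (Fin n)) :=
  {q | q ≠ 0 ∧ ∃ ρ : ℝ, (∀ u ∈ F, ⟪q, u⟫ = ρ) ∧ ∀ y ∈ P \ F, ρ < ⟪q, y⟫}

/-- The embedding of `ℤ₊ⁿ` into `ℝⁿ`. -/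
def toR {n : ℕ} (m : Fin n → ℕ) : EuclideanSpace ℝ (Fin n) := WithLp.toLp 2 (fun j => (m j : ℝ))

/-- `ℝ₊^S = {u ∈ ℝⁿ : uⱼ ≥ 0 for j ∈ S and uⱼ = 0 for j ∉ S}`. -/
def RplusS {n : ℕ} (S : Set (Fin n)) : Set (EuclideanSpace ℝ (Fin n)) :=
  {u | ∀ j, (j ∈ S → 0 ≤ u j) ∧ (j ∉ S → u j = 0)}

/-- The Newton polyhedron `N(Ω, S) = Ch(Ω + ℝ₊^S)`. -/
def newton {n : ℕ} (Ω : Set (Fin n → ℕ)) (S : Set (Fin n)) :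
    Set (EuclideanSpace ℝ (Fin n)) :=
  convexHull ℝ ((toR '' Ω) + RplusS S)

/-- `Z(S) = {u ∈ ℝⁿ : uⱼ ≥ 0 for every j ∈ S}`. -/
def ZS {n : ℕ} (S : Set (Fin n)) : Set (EuclideanSpace ℝ (Fin n)) :=
  {u | ∀ j ∈ S, 0 ≤ u j}

/-!
Every `x ∈ Z(S)` is bounded below on `N(Λ, S)`, since `⟨x, ·⟩` is nonnegative on `ℝ₊^S`, and
the minimum is attained at a point of the finite set `Λ`; the set of minimisers is a nonempty
face `F` exposed by `x`, so `x ∈ F*` and, for `x ≠ 0`, `x ∈ (F*)°`. Conversely, `N(Λ, S)` is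
stable under translation by the unit vectors `eⱼ`, `j ∈ S`, so a linear form that is minimal on a
nonempty face satisfies `⟨x, u⟩ ≤ ⟨x, u + eⱼ⟩`, i.e. `xⱼ ≥ 0`.
-/

variable {n : ℕ}

lemma coneInterior_subset_coneOf (P F : Set (EuclideanSpace ℝ (Fin n))) :
    coneInterior P F ⊆ coneOf P F :=
  fun _ ⟨_, ρ, heq, hlt⟩ => ⟨ρ, heq, fun y hy => (hlt y hy).le⟩

section LevelSet

def innerLevelSet (P : Set (EuclideanSpace ℝ (Fin n))) (x u₀ : EuclideanSpace ℝ (Fin n)) :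
    Set (EuclideanSpace ℝ (Fin n)) :=
  {y ∈ P | ⟪x, y⟫ = ⟪x, u₀⟫}

variable {P : Set (EuclideanSpace ℝ (Fin n))} {x u₀ : EuclideanSpace ℝ (Fin n)}

lemma IsMinOn.inner_lt_of_mem_diff_innerLevelSet (hmin : IsMinOn (⟪x, ·⟫) P u₀)
    {y : EuclideanSpace ℝ (Fin n)} (hy : y ∈ P \ innerLevelSet P x u₀) : ⟪x, u₀⟫ < ⟪x, y⟫ :=
  (hmin hy.1).lt_of_ne fun h => hy.2 ⟨hy.1, h.symm⟩

lemma IsMinOn.isFace_innerLevelSet (hmin : IsMinOn (⟪x, ·⟫) P u₀) :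
    IsFace P (innerLevelSet P x u₀) :=
  ⟨Set.sep_subset _ _, x, _, fun _ hu => hu.2,
    fun _ => hmin.inner_lt_of_mem_diff_innerLevelSet⟩

lemma IsMinOn.mem_coneOf_innerLevelSet (hmin : IsMinOn (⟪x, ·⟫) P u₀) :
    x ∈ coneOf P (innerLevelSet P x u₀) :=
  ⟨_, fun _ hu => hu.2, fun _ hy => (hmin.inner_lt_of_mem_diff_innerLevelSet hy).le⟩

lemma IsMinOn.mem_coneInterior_innerLevelSet (hmin : IsMinOn (⟪x, ·⟫) P u₀) (hx : x ≠ 0) :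
    x ∈ coneInterior P (innerLevelSet P x u₀) :=
  ⟨hx, _, fun _ hu => hu.2, fun _ => hmin.inner_lt_of_mem_diff_innerLevelSet⟩

end LevelSet

section Newton

variable {S : Set (Fin n)}

lemma convex_RplusS (S : Set (Fin n)) : Convex ℝ (RplusS S) := by
  intro u hu v hv a b ha hb _ j
  refine ⟨fun hj => ?_, fun hj => ?_⟩
  · have := (hu j).1 hj
    have := (hv j).1 hj
    simp only [PiLp.add_apply, PiLp.smul_apply, smul_eq_mul]
    positivity
  · simp [(hu j).2 hj, (hv j).2 hj]

lemma add_mem_RplusS {u v : EuclideanSpace ℝ (Fin n)} (hu : u ∈ RplusS S)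
    (hv : v ∈ RplusS S) : u + v ∈ RplusS S := fun j =>
  ⟨fun hj => add_nonneg ((hu j).1 hj) ((hv j).1 hj),
    fun hj => by simp [(hu j).2 hj, (hv j).2 hj]⟩

lemma single_mem_RplusS {j : Fin n} (hj : j ∈ S) :
    EuclideanSpace.single j (1 : ℝ) ∈ RplusS S := by
  intro k
  rcases eq_or_ne k j with rfl | hkj
  · simp [hj]
  · simp [hkj]

lemma inner_nonneg_of_mem_ZS_of_mem_RplusS {x v : EuclideanSpace ℝ (Fin n)} (hx : x ∈ ZS S)
    (hv : v ∈ RplusS S) : 0 ≤ ⟪x, v⟫ := by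
  rw [PiLp.inner_apply]
  refine Finset.sum_nonneg fun j _ => ?_
  by_cases hj : j ∈ S
  · have := (hv j).1 hj
    have := hx j hj
    simp only [RCLike.inner_apply, conj_trivial]
    positivity
  · simp [(hv j).2 hj]

lemma newton_eq (Λ : Set (Fin n → ℕ)) (S : Set (Fin n)) :
    newton Λ S = convexHull ℝ (toR '' Λ) + RplusS S := by
  rw [newton, convexHull_add, (convex_RplusS S).convexHull_eq]

lemma add_mem_newton {Λ : Set (Fin n → ℕ)} {u v : EuclideanSpace ℝ (Fin n)}
    (hu : u ∈ newton Λ S) (hv : v ∈ RplusS S) : u + v ∈ newton Λ S := by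
  rw [newton_eq] at hu ⊢
  obtain ⟨a, ha, w, hw, rfl⟩ := hu
  exact ⟨a, ha, w + v, add_mem_RplusS hw hv, (add_assoc a w v).symm⟩

lemma toR_mem_newton {Λ : Set (Fin n → ℕ)} {m : Fin n → ℕ} (hm : m ∈ Λ) :
    toR m ∈ newton Λ S :=
  subset_convexHull ℝ _ ⟨toR m, ⟨m, hm, rfl⟩, 0, fun _ => ⟨fun _ => le_rfl, fun _ => rfl⟩,
    add_zero _⟩

lemma exists_isMinOn_inner_newton {Λ : Set (Fin n → ℕ)} (hfin : Λ.Finite)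
    (hne : Λ.Nonempty) {x : EuclideanSpace ℝ (Fin n)} (hx : x ∈ ZS S) :
    ∃ u₀ ∈ newton Λ S, IsMinOn (⟪x, ·⟫) (newton Λ S) u₀ := by
  obtain ⟨m₀, hm₀, hmin⟩ := Set.exists_min_image Λ (fun m => ⟪x, toR m⟫) hfin hne
  refine ⟨toR m₀, toR_mem_newton hm₀, fun y hy => ?_⟩
  have hlin : IsLinearMap ℝ (⟪x, ·⟫ : EuclideanSpace ℝ (Fin n) → ℝ) :=
    ⟨inner_add_right x, fun c w => real_inner_smul_right x w c⟩
  refine convexHull_min ?_ (convex_halfSpace_ge hlin _) hy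
  rintro _ ⟨_, ⟨m, hm, rfl⟩, v, hv, rfl⟩
  have := inner_nonneg_of_mem_ZS_of_mem_RplusS hx hv
  have := hmin m hm
  simp only [Set.mem_ofPred_eq, inner_add_right]
  linarith

lemma mem_ZS_of_mem_coneOf {Λ : Set (Fin n → ℕ)} {F : Set (EuclideanSpace ℝ (Fin n))}
    (hFP : F ⊆ newton Λ S) (hF : F.Nonempty) {x : EuclideanSpace ℝ (Fin n)}
    (hx : x ∈ coneOf (newton Λ S) F) : x ∈ ZS S := by
  intro j hj
  obtain ⟨u, hu⟩ := hF
  obtain ⟨ρ, heq, hge⟩ := hx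
  set v := u + EuclideanSpace.single j (1 : ℝ)
  have hv : ρ ≤ ⟪x, v⟫ := by
    by_cases hvF : v ∈ F
    · exact (heq v hvF).ge
    · exact hge v ⟨add_mem_newton (hFP hu) (single_mem_RplusS hj), hvF⟩
  rw [inner_add_right, heq u hu, EuclideanSpace.inner_single_right] at hv
  simpa using hv

lemma exists_face_mem_coneOf_newton {Λ : Set (Fin n → ℕ)} (hfin : Λ.Finite)
    (hne : Λ.Nonempty) {x : EuclideanSpace ℝ (Fin n)} (hx : x ∈ ZS S) :
    ∃ F, (IsFace (newton Λ S) F ∧ F.Nonempty) ∧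
      x ∈ coneOf (newton Λ S) F ∧ (x ≠ 0 → x ∈ coneInterior (newton Λ S) F) := by
  obtain ⟨u₀, hu₀, hmin⟩ := exists_isMinOn_inner_newton hfin hne hx
  exact ⟨_, ⟨hmin.isFace_innerLevelSet, u₀, hu₀, rfl⟩, hmin.mem_coneOf_innerLevelSet,
    hmin.mem_coneInterior_innerLevelSet⟩

end Newton

/-- The union, over all `d`-tuples of nonempty faces `F_ν` of `N(Λ_ν,S)`, of the
intersections `⋂_ν F_ν*` (resp. `⋂_ν (F_ν*)°`) equals `Z(S)` (resp. `Z(S) \ {0}`). -/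
theorem stmt11 {n d : ℕ} (hd : 0 < d) (Λ : Fin d → Set (Fin n → ℕ))
    (hfin : ∀ ν, (Λ ν).Finite) (hne : ∀ ν, (Λ ν).Nonempty) (S : Set (Fin n)) :
    {x | ∃ F : Fin d → Set (EuclideanSpace ℝ (Fin n)),
        (∀ ν, IsFace (newton (Λ ν) S) (F ν) ∧ (F ν).Nonempty) ∧
        ∀ ν, x ∈ coneOf (newton (Λ ν) S) (F ν)} = ZS S ∧
    {x | ∃ F : Fin d → Set (EuclideanSpace ℝ (Fin n)),
        (∀ ν, IsFace (newton (Λ ν) S) (F ν) ∧ (F ν).Nonempty) ∧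
        ∀ ν, x ∈ coneInterior (newton (Λ ν) S) (F ν)} = ZS S \ {0} := by
  have mem_ZS {F : Fin d → Set (EuclideanSpace ℝ (Fin n))}
      (hF : ∀ ν, IsFace (newton (Λ ν) S) (F ν) ∧ (F ν).Nonempty) {x}
      (hx : x ∈ coneOf (newton (Λ ⟨0, hd⟩) S) (F ⟨0, hd⟩)) : x ∈ ZS S :=
    mem_ZS_of_mem_coneOf (hF _).1.1 (hF _).2 hx
  refine ⟨Set.ext fun x => ⟨?_, fun hx => ?_⟩, Set.ext fun x => ⟨?_, fun ⟨hx, hx0⟩ => ?_⟩⟩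
  · rintro ⟨F, hF, hcone⟩
    exact mem_ZS hF (hcone _)
  · choose F hF hcone _ using fun ν => exists_face_mem_coneOf_newton (hfin ν) (hne ν) hx
    exact ⟨F, hF, hcone⟩
  · rintro ⟨F, hF, hcone⟩
    exact ⟨mem_ZS hF (coneInterior_subset_coneOf _ _ (hcone _)), (hcone ⟨0, hd⟩).1⟩
  · choose F hF _ hcone using fun ν => exists_face_mem_coneOf_newton (hfin ν) (hne ν) hx
    exact ⟨F, hF, fun ν => hcone ν hx0⟩
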